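/- arXiv:2007.02030 — 5 statements merged into one kernel-verified Lean document; each statement's English description precedes it below -/
import Mathlib

section
/- Let a ∈ F^× and let F(z) ∈ F[[z,z^{-1}]] be a formal distribution, A(v) ∈ F[[v]] a nonzero formal power series, n ∈ ℕ, and B₀(v),…,B_n(v) ∈ F[[v]], such that (z - a)·A(v)·F(z) + ∑_{p=0}^n B_p(v) δ^{(p)}(z/a) = 0. Then F(z) = ∑_{p=0}^{n+1} f_p δ^{(p)}(z/a) for some scalars f₀,…,f_{n+1} ∈ F. -/
/-!
Pick a coefficient `A_j ≠ 0` of `A`; the `v^j`-part of the hypothesis says that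
`(z - a) F(z)` is a combination of `δ^{(p)}(z/a)`, `p ≤ n`. Since
`(z - a) δ^{(p+1)}(z/a) = -(p+1) a δ^{(p)}(z/a)`, subtracting a suitable combination of the
`δ^{(p+1)}(z/a)` leaves a distribution killed by `z - a`, and these are the multiples of
`δ(z/a)`.
-/

/-- coefficient of `z^k` in `δ^{(p)}(z/a) = ∑_{m∈ℤ} (∏_{i<p}(m-i)) (z/a)^{m-p}`. -/
noncomputable def deltaD {F : Type*} [Field F] (p : ℕ) (a : F) (k : ℤ) : F :=
  ((∏ i ∈ Finset.range p, (k + (p : ℤ) - (i : ℤ)) : ℤ) : F) * a ^ (-k)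

open Finset

section
variable {F : Type*} [Field F] {a : F}

lemma deltaD_zero (k : ℤ) : deltaD 0 a k = a ^ (-k) := by
  simp [deltaD]

lemma zpow_neg_sub_one (ha : a ≠ 0) (k : ℤ) : a ^ (-(k - 1)) = a * a ^ (-k) := by
  rw [neg_sub, sub_eq_neg_add, zpow_add_one₀ ha, mul_comm]

/-- Coefficientwise form of `(z - a) δ^{(p+1)}(z/a) = -(p+1) a δ^{(p)}(z/a)`. -/
lemma deltaD_succ_sub_one_sub (ha : a ≠ 0) (p : ℕ) (k : ℤ) :
    deltaD (p + 1) a (k - 1) - a * deltaD (p + 1) a k = -((p + 1) * a) * deltaD p a k := by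
  have hprod : ∏ i ∈ range (p + 1), (k - 1 + ((p + 1 : ℕ) : ℤ) - i)
      = ∏ i ∈ range (p + 1), (k + ((p + 1 : ℕ) : ℤ) - i)
        - (p + 1) * ∏ i ∈ range p, (k + (p : ℤ) - i) := by
    rw [prod_range_succ, prod_range_succ']
    push_cast
    ring_nf
  simp only [deltaD, hprod, zpow_neg_sub_one ha]
  push_cast
  ring

lemma eq_mul_zpow_of_sub_one_eq (ha : a ≠ 0) {G : ℤ → F} (hG : ∀ k, G (k - 1) = a * G k)
    (k : ℤ) : G k = G 0 * a ^ (-k) := by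
  induction k using Int.induction_on with
  | zero => simp
  | succ k ih =>
    have h := hG (k + 1)
    rw [add_sub_cancel_right, ih] at h
    apply mul_left_cancel₀ ha
    rw [← h, neg_add, zpow_add₀ ha, zpow_neg_one]
    field_simp
  | pred k ih =>
    rw [hG, ih, zpow_neg_sub_one ha]
    ring

lemma exists_deltaD_expansion_of_sub_one_sub [CharZero F] (ha : a ≠ 0) {Fd : ℤ → F} {n : ℕ}
    {c : ℕ → F} (hFd : ∀ k, Fd (k - 1) - a * Fd k = ∑ p ∈ range (n + 1), c p * deltaD p a k) :
    ∃ f : ℕ → F, ∀ k : ℤ, Fd k = ∑ p ∈ range (n + 2), f p * deltaD p a k := by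
  set g : ℕ → F := fun q => -c q / ((q + 1) * a)
  have hg (q : ℕ) : g q * -((q + 1) * a) = c q := by
    have : ((q : F) + 1) * a ≠ 0 := mul_ne_zero q.cast_add_one_ne_zero ha
    simp only [g]
    field_simp
  set G : ℤ → F := fun k => Fd k - ∑ q ∈ range (n + 1), g q * deltaD (q + 1) a k
  have hG (k : ℤ) : G (k - 1) = a * G k := by
    have hterm (q : ℕ) : g q * deltaD (q + 1) a (k - 1) - a * (g q * deltaD (q + 1) a k)
        = c q * deltaD q a k := by
      rw [← hg q, mul_assoc, ← deltaD_succ_sub_one_sub ha]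
      ring
    refine sub_eq_zero.mp ?_
    calc G (k - 1) - a * G k
        = (Fd (k - 1) - a * Fd k) - ∑ q ∈ range (n + 1),
            (g q * deltaD (q + 1) a (k - 1) - a * (g q * deltaD (q + 1) a k)) := by
          simp only [G, mul_sub, mul_sum, sum_sub_distrib]
          ring
      _ = 0 := by simp only [hFd, hterm, sub_self]
  refine ⟨fun | 0 => G 0 | q + 1 => g q, fun k => ?_⟩
  rw [sum_range_succ', deltaD_zero, ← eq_mul_zpow_of_sub_one_eq ha hG k]
  simp [G]

end

/-- A formal distribution `F(z) ∈ F[[z,z⁻¹]]` is encoded by its coefficient function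
`Fd : ℤ → F`, and the identity is stated coefficientwise in `v^j z^k`. -/
theorem stmt_3 {F : Type*} [Field F] [CharZero F] (a : F) (ha : a ≠ 0)
    (Fd : ℤ → F) (A : PowerSeries F) (hA : A ≠ 0) (n : ℕ) (B : ℕ → PowerSeries F)
    (heq : ∀ (j : ℕ) (k : ℤ),
      PowerSeries.coeff j A * (Fd (k - 1) - a * Fd k) +
        ∑ p ∈ Finset.range (n + 1), PowerSeries.coeff j (B p) * deltaD p a k = 0) :
    ∃ f : ℕ → F, ∀ k : ℤ, Fd k = ∑ p ∈ Finset.range (n + 2), f p * deltaD p a k := by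
  obtain ⟨j, hj⟩ : ∃ j, PowerSeries.coeff j A ≠ 0 := by
    by_contra! h
    exact hA (PowerSeries.ext fun j => by simp [h j])
  refine exists_deltaD_expansion_of_sub_one_sub ha
    (c := fun p => -PowerSeries.coeff j (B p) / PowerSeries.coeff j A) fun k => ?_
  apply mul_left_cancel₀ hj
  have hcancel (p : ℕ) : PowerSeries.coeff j A *
      (-PowerSeries.coeff j (B p) / PowerSeries.coeff j A * deltaD p a k)
      = -(PowerSeries.coeff j (B p) * deltaD p a k) := by
    field_simp
  simp only [mul_sum, hcancel, sum_neg_distrib]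
  linear_combination heq j k
end

section
/- If a formal distribution F(z) ∈ F[[z,z^{-1}]] satisfies (z - a)^{N} F(z) = 0 for some a ∈ F^× and N ∈ ℕ, then F(z) = ∑_{p=0}^{N-1} f_p δ^{(p)}(z/a) for some f₀,…,f_{N-1} ∈ F. -/
/-!
Multiplication by `z - a` sends `δ^{(p+1)}(z/a)` to the nonzero multiple `-(p+1) a` of
`δ^{(p)}(z/a)`, and its kernel is the line spanned by `δ(z/a)`, since `G (k-1) = a G k` forces
`G k = G 0 a^{-k}`. Induct on `N`: if `(z-a)^{N+1} F = 0`, then `(z-a) F` is a combination of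
the `δ^{(p)}(z/a)` with `p < N`; the same combination of the rescaled `δ^{(p+1)}(z/a)` gives an
`H` with `(z-a) H = (z-a) F`, and `F - H` is a multiple of `δ(z/a)`.
-/

section

variable {F : Type*} [Field F]

def mulZSub (a : F) : (ℤ → F) →ₗ[F] (ℤ → F) where
  toFun G k := G (k - 1) - a * G k
  map_add' G H := by ext k; simp only [Pi.add_apply]; ring
  map_smul' c G := by ext k; simp only [Pi.smul_apply, smul_eq_mul, RingHom.id_apply]; ring

@[simp]
lemma mulZSub_apply (a : F) (G : ℤ → F) (k : ℤ) : mulZSub a G k = G (k - 1) - a * G k := rfl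

lemma deltaD_zero_apply (a : F) (k : ℤ) : deltaD 0 a k = a ^ (-k) := by
  simp [deltaD]

lemma mulZSub_deltaD_succ {a : F} (ha : a ≠ 0) (p : ℕ) :
    mulZSub a (deltaD (p + 1) a) = (-((p : F) + 1) * a) • deltaD p a := by
  ext k
  have hprod_pred : ∏ i ∈ Finset.range (p + 1), ((k - 1) + ((p : ℤ) + 1) - (i : ℤ))
      = (∏ i ∈ Finset.range p, (k + (p : ℤ) - (i : ℤ))) * k := by
    rw [Finset.prod_range_succ]
    congr 1
    · exact Finset.prod_congr rfl fun i _ => by ring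
    · ring
  have hprod : ∏ i ∈ Finset.range (p + 1), (k + ((p : ℤ) + 1) - (i : ℤ))
      = (∏ i ∈ Finset.range p, (k + (p : ℤ) - (i : ℤ))) * (k + p + 1) := by
    rw [Finset.prod_range_succ']
    congr 1
    · exact Finset.prod_congr rfl fun i _ => by push_cast; ring
    · push_cast; ring
  have hpow : a ^ (-(k - 1)) = a * a ^ (-k) := by
    rw [neg_sub, sub_eq_add_neg, zpow_add₀ ha, zpow_one]
  simp only [mulZSub_apply, deltaD, Pi.smul_apply, smul_eq_mul]
  push_cast [hprod_pred, hprod, hpow]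
  ring

lemma eq_smul_deltaD_zero_of_mulZSub_eq_zero {a : F} (ha : a ≠ 0) {G : ℤ → F}
    (hG : mulZSub a G = 0) : G = G 0 • deltaD 0 a := by
  have hrec (k : ℤ) : G (k - 1) = a * G k := sub_eq_zero.1 (congrFun hG k)
  have hconst (k : ℤ) : G k * a ^ k = G 0 := by
    induction k using Int.induction_on with
    | zero => simp
    | succ n ih =>
      rw [← ih, ← add_sub_cancel_right (n : ℤ) 1, hrec, add_sub_cancel_right, zpow_add_one₀ ha]
      ring
    | pred n ih =>
      rw [← ih, hrec, zpow_sub_one₀ ha]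
      field_simp
  ext k
  rw [Pi.smul_apply, smul_eq_mul, deltaD_zero_apply, ← hconst k, mul_assoc, ← zpow_add₀ ha,
    add_neg_cancel, zpow_zero, mul_one]

lemma eq_sum_deltaD_of_mulZSub_iterate_eq_zero [CharZero F] {a : F} (ha : a ≠ 0) (N : ℕ)
    {G : ℤ → F} (hG : (mulZSub a)^[N] G = 0) :
    ∃ f : ℕ → F, G = ∑ p ∈ Finset.range N, f p • deltaD p a := by
  induction N generalizing G with
  | zero => exact ⟨0, by simpa using hG⟩
  | succ N ih =>
    obtain ⟨g, hg⟩ := ih (G := mulZSub a G) (by rwa [← Function.iterate_succ_apply])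
    have hc (p : ℕ) : -((p : F) + 1) * a ≠ 0 :=
      mul_ne_zero (neg_ne_zero.2 (Nat.cast_add_one_ne_zero p)) ha
    set H := ∑ p ∈ Finset.range N, (g p / (-((p : F) + 1) * a)) • deltaD (p + 1) a
    have hH : mulZSub a H = mulZSub a G := by
      simp only [H, hg, map_sum, map_smul, mulZSub_deltaD_succ ha, smul_smul,
        div_mul_cancel₀ _ (hc _)]
    have hker := eq_smul_deltaD_zero_of_mulZSub_eq_zero ha
      (G := G - H) (by rw [map_sub, hH, sub_self])
    refine ⟨fun p => Nat.casesOn p ((G - H) 0) fun p => g p / (-((p : F) + 1) * a), ?_⟩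
    rw [Finset.sum_range_succ']
    show G = H + (G - H) 0 • deltaD 0 a
    rw [← hker, add_sub_cancel]

end

/-- If `(z - a)^N F(z) = 0` for a formal distribution `F(z) ∈ F[[z,z⁻¹]]`
(encoded by its coefficient function `Fd : ℤ → F`, multiplication by `(z-a)`
being the operator `G ↦ (k ↦ G (k-1) - a G k)`), then
`F(z) = ∑_{p=0}^{N-1} f_p δ^{(p)}(z/a)`. -/
theorem stmt_4 {F : Type*} [Field F] [CharZero F] (a : F) (ha : a ≠ 0) (N : ℕ) (Fd : ℤ → F)
    (h : (fun G : ℤ → F => fun k => G (k - 1) - a * G k)^[N] Fd = fun _ => 0) :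
    ∃ f : ℕ → F, ∀ k : ℤ, Fd k = ∑ p ∈ Finset.range N, f p * deltaD p a k := by
  obtain ⟨f, hf⟩ := eq_sum_deltaD_of_mulZSub_iterate_eq_zero ha N (G := Fd) h
  exact ⟨f, fun k => by simp [hf]⟩
end

section
/- Let κ⁺(z) ∈ F[[z^{-1}]] and κ⁻(z) ∈ F[[z]] be formal series and suppose there exist formal Laurent distributions arranged as an (N+1)×(N+1) matrix whose (i,j) entry is z_j^{i} · (κ⁺(z_j) - κ⁻(z_j)), such that the product ∏_{0≤i<j≤N} (z_i - z_j) · ∏_{i=0}^N (κ⁺(z_i) - κ⁻(z_i)) = 0 as a formal distribution in z₀,…,z_N. Then there exists a nonzero polynomial P(z) ∈ F[z] of degree at most N such that P(z)·(κ⁺(z) - κ⁻(z)) = 0 in F[[z,z^{-1}]]. -/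
/-!
Pairing the Vandermonde polynomial `∏_{i<j} (X_i - X_j) = ± det (X_i ^ j)` against the weight
`d ↦ ∏_i g(k_i - d_i)` and expanding the determinant by Leibniz shows that the hypothesis says
exactly `det (g(k_i - j))_{i,j} = 0` for every choice of `k`. Hence no `N + 1` of the vectors
`(g(a - j))_{j ≤ N}`, `a ∈ ℤ`, are linearly independent, so they span a proper subspace of `F^{N+1}`.
A nonzero vector `c` orthogonal to all of them is the coefficient vector of the required `P`.
-/

open MvPolynomial Finset

namespace MvPolynomial

variable {R σ : Type*}

noncomputable def coeffPairing [CommSemiring R] (w : (σ →₀ ℕ) → R) : MvPolynomial σ R →ₗ[R] R :=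
  Finsupp.linearCombination R w ∘ₗ (AddMonoidAlgebra.coeffLinearEquiv R).toLinearMap

theorem coeffPairing_apply [CommSemiring R] (w : (σ →₀ ℕ) → R) (p : MvPolynomial σ R) :
    coeffPairing w p = ∑ d ∈ p.support, coeff d p * w d := by
  simp only [coeffPairing, LinearMap.coe_comp, Function.comp_apply,
    Finsupp.linearCombination_apply, Finsupp.sum, smul_eq_mul]
  rfl

theorem coeffPairing_monomial [CommSemiring R] (w : (σ →₀ ℕ) → R) (d : σ →₀ ℕ) (a : R) :
    coeffPairing w (monomial d a) = a * w d := by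
  change Finsupp.linearCombination R w (Finsupp.single d a) = _
  simp

theorem prod_X_pow_eq_monomial_univ [CommSemiring R] [Fintype σ] (s : σ →₀ ℕ) :
    ∏ j, (X j : MvPolynomial σ R) ^ s j = monomial s 1 := by
  rw [monomial_eq, C_1, one_mul, Finsupp.prod_fintype]
  simp

theorem coeffPairing_det_vandermonde [CommRing R] {n : ℕ} (h : Fin n → ℕ → R) :
    coeffPairing (fun d => ∏ i, h i (d i))
        (Matrix.vandermonde fun i => (X i : MvPolynomial (Fin n) R)).det =
      (Matrix.of fun i j : Fin n => h i j).det := by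
  simp only [Matrix.det_apply', map_sum, Matrix.vandermonde_apply, Matrix.of_apply]
  refine sum_congr rfl fun τ _ => ?_
  set d : Fin n →₀ ℕ := Finsupp.equivFunOnFinite.symm fun j => (τ.symm j : ℕ)
  have hmon : ∏ i, (X (τ i) : MvPolynomial (Fin n) R) ^ (i : ℕ) = monomial d 1 := by
    rw [← prod_X_pow_eq_monomial_univ, ← Equiv.prod_comp τ fun j => X j ^ d j]
    simp [d]
  rw [hmon, ← zsmul_eq_mul, map_zsmul, coeffPairing_monomial, one_mul, zsmul_eq_mul,
    ← Equiv.prod_comp τ]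
  simp [d]

end MvPolynomial

theorem Matrix.prod_Ioi_sub_eq_neg_one_pow_mul_det_vandermonde {R : Type*} [CommRing R] {n : ℕ}
    (v : Fin n → R) :
    ∏ i, ∏ j ∈ Ioi i, (v i - v j) = (-1) ^ (∑ i : Fin n, #(Ioi i)) * (vandermonde v).det := by
  calc ∏ i, ∏ j ∈ Ioi i, (v i - v j) = ∏ i, ∏ j ∈ Ioi i, (-1) * (v j - v i) := by
        simp only [neg_one_mul, neg_sub]
    _ = _ := by simp only [prod_mul_distrib, prod_const, prod_pow_eq_pow_sum, det_vandermonde]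

theorem MvPolynomial.det_eq_zero_of_coeffPairing_prod_sub_eq_zero {R : Type*} [CommRing R]
    {n : ℕ} (h : Fin n → ℕ → R)
    (hV : coeffPairing (fun d => ∏ i, h i (d i))
      (∏ i : Fin n, ∏ j ∈ Ioi i, (X i - X j) : MvPolynomial (Fin n) R) = 0) :
    (Matrix.of fun i j : Fin n => h i j).det = 0 := by
  rwa [Matrix.prod_Ioi_sub_eq_neg_one_pow_mul_det_vandermonde, ← C_1, ← C_neg, ← C_pow,
    ← smul_eq_C_mul, map_smul, smul_eq_mul, neg_one_pow_mul_eq_zero_iff,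
    coeffPairing_det_vandermonde] at hV

theorem Submodule.span_range_ne_top_of_forall_det_eq_zero {K ι : Type*} [Field K] {n : ℕ}
    (v : ι → Fin n → K) (hv : ∀ k : Fin n → ι, (Matrix.of fun i => v (k i)).det = 0) :
    span K (Set.range v) ≠ ⊤ := by
  intro htop
  obtain ⟨κ, a, -, hspan, hli⟩ := exists_linearIndependent' K v
  have : Fintype κ := @Fintype.ofFinite _ hli.finite
  have hcard : Fintype.card κ = n := by
    rw [← finrank_span_eq_card hli, hspan, htop, finrank_top, Module.finrank_fin_fun]
  let e := (Fintype.equivFinOfCardEq hcard).symm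
  have hrows : LinearIndependent K (Matrix.of fun i => v (a (e i))).row :=
    hli.comp e e.injective
  rw [Matrix.linearIndependent_rows_iff_isUnit, Matrix.isUnit_iff_isUnit_det] at hrows
  exact hrows.ne_zero (hv (a ∘ e))

theorem exists_ne_zero_forall_dotProduct_eq_zero_of_forall_det_eq_zero {K ι : Type*} [Field K]
    {n : ℕ} (v : ι → Fin n → K) (hv : ∀ k : Fin n → ι, (Matrix.of fun i => v (k i)).det = 0) :
    ∃ c ≠ 0, ∀ a, c ⬝ᵥ v a = 0 := by
  have hW := Submodule.span_range_ne_top_of_forall_det_eq_zero v hv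
  rw [Ne, ← Submodule.dualAnnihilator_eq_bot_iff, ← Ne, Submodule.ne_bot_iff] at hW
  obtain ⟨f, hf, hf0⟩ := hW
  refine ⟨(dotProductEquiv K (Fin n)).symm f, by simpa using hf0, fun a => ?_⟩
  rw [← dotProductEquiv_apply_apply, LinearEquiv.apply_symm_apply]
  exact (Submodule.mem_dualAnnihilator f).mp hf (v a) (Submodule.subset_span ⟨a, rfl⟩)

theorem stmt_6_general {F : Type*} [Field F] (N : ℕ) (g : ℤ → F)
    (hvan : ∀ k : Fin (N + 1) → ℤ,
      ∑ d ∈ (∏ i : Fin (N + 1), ∏ j ∈ Finset.univ.filter (fun j => i < j),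
            (MvPolynomial.X i - MvPolynomial.X j) : MvPolynomial (Fin (N + 1)) F).support,
        MvPolynomial.coeff d
            (∏ i : Fin (N + 1), ∏ j ∈ Finset.univ.filter (fun j => i < j),
              (MvPolynomial.X i - MvPolynomial.X j) : MvPolynomial (Fin (N + 1)) F) *
          ∏ i : Fin (N + 1), g (k i - (d i : ℤ)) = 0) :
    ∃ P : Polynomial F, P ≠ 0 ∧ P.natDegree ≤ N ∧
      ∀ k : ℤ, ∑ j ∈ Finset.range (N + 1), P.coeff j * g (k - (j : ℤ)) = 0 := by
  have hdet (k : Fin (N + 1) → ℤ) : (Matrix.of fun i j : Fin (N + 1) => g (k i - j)).det = 0 :=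
    det_eq_zero_of_coeffPairing_prod_sub_eq_zero (fun i m => g (k i - m))
      (by simpa only [filter_lt_eq_Ioi, ← coeffPairing_apply] using hvan k)
  obtain ⟨c, hc0, hc⟩ :=
    exists_ne_zero_forall_dotProduct_eq_zero_of_forall_det_eq_zero (fun a j => g (a - j)) hdet
  set P := (Polynomial.degreeLTEquiv F (N + 1)).symm c
  have hcoeff (j : Fin (N + 1)) : (P : Polynomial F).coeff j = c j :=
    congrFun ((Polynomial.degreeLTEquiv F (N + 1)).apply_symm_apply c) j
  refine ⟨P, by simpa [P] using hc0, ?_, fun k => ?_⟩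
  · exact Polynomial.natDegree_le_iff_degree_le.mpr
      (Polynomial.mem_degreeLE.mp (Polynomial.degreeLT_succ_eq_degreeLE (R := F) ▸ P.2))
  · rw [← Fin.sum_univ_eq_sum_range (fun j => (P : Polynomial F).coeff j * g (k - j))]
    simpa [hcoeff, dotProduct] using hc k

/-- If the Vandermonde-type distribution
`∏_{0≤i<j≤N}(z_i - z_j) ∏_{i=0}^N (κ⁺(z_i) - κ⁻(z_i))` vanishes (where
`κ⁺ ∈ F[[z⁻¹]]`, `κ⁻ ∈ F[[z]]` are encoded by their coefficient functions
`kp, km : ℕ → F` and `g : ℤ → F` is the coefficient function of `κ⁺ - κ⁻`),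
then there is a nonzero polynomial `P` of degree at most `N` with
`P(z)(κ⁺(z) - κ⁻(z)) = 0` in `F[[z,z⁻¹]]`. -/
theorem stmt_6 {F : Type*} [Field F] (N : ℕ) (kp km : ℕ → F) (g : ℤ → F)
    (hg : ∀ k : ℤ, g k = (if k ≤ 0 then kp (-k).toNat else 0) - (if 0 ≤ k then km k.toNat else 0))
    (hvan : ∀ k : Fin (N + 1) → ℤ,
      ∑ d ∈ (∏ i : Fin (N + 1), ∏ j ∈ Finset.univ.filter (fun j => i < j),
            (MvPolynomial.X i - MvPolynomial.X j) : MvPolynomial (Fin (N + 1)) F).support,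
        MvPolynomial.coeff d
            (∏ i : Fin (N + 1), ∏ j ∈ Finset.univ.filter (fun j => i < j),
              (MvPolynomial.X i - MvPolynomial.X j) : MvPolynomial (Fin (N + 1)) F) *
          ∏ i : Fin (N + 1), g (k i - (d i : ℤ)) = 0) :
    ∃ P : Polynomial F, P ≠ 0 ∧ P.natDegree ≤ N ∧
      ∀ k : ℤ, ∑ j ∈ Finset.range (N + 1), P.coeff j * g (k - (j : ℤ)) = 0 :=
  stmt_6_general N g hvan
end

section
/- Suppose P(z) ∈ F[z] is a nonzero polynomial, κ⁺(z) ∈ F[[z^{-1}]] and κ⁻(z) ∈ F[[z]] are formal series with P(z)(κ⁺(z) - κ⁻(z)) = 0 in F[[z,z^{-1}]]. Then there exists a polynomial Q(z) ∈ F[z] with deg Q ≤ deg P such that κ⁺(z) is the expansion of the rational function Q(z)/P(z) at z = ∞ and κ⁻(z) is its expansion at z = 0. -/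
/-!
Since `κ⁺` has no terms of positive degree, `P·κ⁺` has none of degree above `deg P`; since `κ⁻`
has no terms of negative degree, neither has `P·κ⁻`. The two products agree, so their common
value is supported in `[0, deg P]`, i.e. it is a polynomial `Q` with `deg Q ≤ deg P`.
-/

open Finset

namespace Polynomial

variable {R : Type*}

/-- The `k`-th coefficient of `P · g`, a formal distribution `g ∈ R[[z, z⁻¹]]` being encoded by
its coefficient function `ℤ → R`. -/
def mulLaurentCoeff [Semiring R] (P : R[X]) (g : ℤ → R) (k : ℤ) : R :=
  ∑ j ∈ range (P.natDegree + 1), P.coeff j * g (k - j)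

theorem mulLaurentCoeff_sub [Ring R] (P : R[X]) (g h : ℤ → R) (k : ℤ) :
    P.mulLaurentCoeff (g - h) k = P.mulLaurentCoeff g k - P.mulLaurentCoeff h k := by
  simp only [mulLaurentCoeff, Pi.sub_apply, mul_sub, sum_sub_distrib]

theorem mulLaurentCoeff_eq_zero_of_natDegree_lt [Semiring R] (P : R[X]) {g : ℤ → R}
    (hg : ∀ m, 0 < m → g m = 0) {k : ℤ} (hk : (P.natDegree : ℤ) < k) :
    P.mulLaurentCoeff g k = 0 := by
  refine sum_eq_zero fun j hj => ?_
  have hjn : (j : ℤ) ≤ P.natDegree := by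
    exact_mod_cast Nat.lt_succ_iff.mp (mem_range.mp hj)
  rw [hg _ (by omega), mul_zero]

theorem mulLaurentCoeff_eq_zero_of_neg [Semiring R] (P : R[X]) {g : ℤ → R}
    (hg : ∀ m, m < 0 → g m = 0) {k : ℤ} (hk : k < 0) :
    P.mulLaurentCoeff g k = 0 :=
  sum_eq_zero fun j _ => by rw [hg _ (by omega), mul_zero]

theorem exists_natDegree_le_coeff_eq [Semiring R] {n : ℕ} {f : ℤ → R}
    (hneg : ∀ k, k < 0 → f k = 0) (hgt : ∀ k, (n : ℤ) < k → f k = 0) :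
    ∃ Q : R[X], Q.natDegree ≤ n ∧ ∀ k, f k = if 0 ≤ k then Q.coeff k.toNat else 0 := by
  refine ⟨∑ i ∈ range (n + 1), monomial i (f i), ?_, fun k => ?_⟩
  · exact natDegree_sum_le_of_forall_le _ _ fun i hi =>
      (natDegree_monomial_le _).trans (Nat.lt_succ_iff.mp (mem_range.mp hi))
  · rw [finsetSum_coeff]
    simp only [coeff_monomial]
    rw [sum_ite_eq' (range (n + 1)) k.toNat fun i => f i]
    by_cases hk₀ : 0 ≤ k
    · rw [if_pos hk₀]
      split_ifs with hkn
      · rw [Int.toNat_of_nonneg hk₀]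
      · exact hgt k (by rw [mem_range] at hkn; omega)
    · rw [if_neg hk₀, hneg k (by omega)]

end Polynomial

open Polynomial in
theorem stmt_7_general {F : Type*} [Field F] (P : Polynomial F) (kp km : ℕ → F)
    (hvan : ∀ k : ℤ, ∑ j ∈ Finset.range (P.natDegree + 1),
      P.coeff j * ((if k - (j : ℤ) ≤ 0 then kp (-(k - (j : ℤ))).toNat else 0) -
        (if 0 ≤ k - (j : ℤ) then km (k - (j : ℤ)).toNat else 0)) = 0) :
    ∃ Q : Polynomial F, Q.natDegree ≤ P.natDegree ∧
      (∀ k : ℤ, ∑ j ∈ Finset.range (P.natDegree + 1),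
        P.coeff j * (if k - (j : ℤ) ≤ 0 then kp (-(k - (j : ℤ))).toNat else 0) =
          (if 0 ≤ k then Q.coeff k.toNat else 0)) ∧
      (∀ k : ℤ, ∑ j ∈ Finset.range (P.natDegree + 1),
        P.coeff j * (if 0 ≤ k - (j : ℤ) then km (k - (j : ℤ)).toNat else 0) =
          (if 0 ≤ k then Q.coeff k.toNat else 0)) := by
  set κp : ℤ → F := fun m => if m ≤ 0 then kp (-m).toNat else 0
  set κm : ℤ → F := fun m => if 0 ≤ m then km m.toNat else 0
  have heq : ∀ k, P.mulLaurentCoeff κp k = P.mulLaurentCoeff κm k := fun k =>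
    sub_eq_zero.mp ((P.mulLaurentCoeff_sub κp κm k).symm.trans (hvan k))
  obtain ⟨Q, hQdeg, hQ⟩ := exists_natDegree_le_coeff_eq (f := P.mulLaurentCoeff κp)
    (fun k hk => (heq k).trans <|
      P.mulLaurentCoeff_eq_zero_of_neg (fun m hm => if_neg (by omega)) hk)
    (fun k hk => P.mulLaurentCoeff_eq_zero_of_natDegree_lt (fun m hm => if_neg (by omega)) hk)
  exact ⟨Q, hQdeg, hQ, fun k => (heq k).symm.trans (hQ k)⟩

/-- If `P(z)(κ⁺(z) - κ⁻(z)) = 0` for a nonzero polynomial `P`, where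
`κ⁺(z) = ∑_{m≥0} kp m z^{-m} ∈ F[[z⁻¹]]` and `κ⁻(z) = ∑_{m≥0} km m z^{m} ∈ F[[z]]`,
then there is `Q ∈ F[z]` with `deg Q ≤ deg P` such that `P·κ⁺ = Q` (i.e. `κ⁺` is
the expansion of `Q/P` at `∞`) and `P·κ⁻ = Q` (i.e. `κ⁻` is the expansion of
`Q/P` at `0`), all identities being taken coefficientwise in `F[[z,z⁻¹]]`. -/
theorem stmt_7 {F : Type*} [Field F] (P : Polynomial F) (hP : P ≠ 0) (kp km : ℕ → F)
    (hvan : ∀ k : ℤ, ∑ j ∈ Finset.range (P.natDegree + 1),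
      P.coeff j * ((if k - (j : ℤ) ≤ 0 then kp (-(k - (j : ℤ))).toNat else 0) -
        (if 0 ≤ k - (j : ℤ) then km (k - (j : ℤ)).toNat else 0)) = 0) :
    ∃ Q : Polynomial F, Q.natDegree ≤ P.natDegree ∧
      (∀ k : ℤ, ∑ j ∈ Finset.range (P.natDegree + 1),
        P.coeff j * (if k - (j : ℤ) ≤ 0 then kp (-(k - (j : ℤ))).toNat else 0) =
          (if 0 ≤ k then Q.coeff k.toNat else 0)) ∧
      (∀ k : ℤ, ∑ j ∈ Finset.range (P.natDegree + 1),
        P.coeff j * (if 0 ≤ k - (j : ℤ) then km (k - (j : ℤ)).toNat else 0) =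
          (if 0 ≤ k then Q.coeff k.toNat else 0)) :=
  stmt_7_general P kp km hvan
end

section
/- In the quantum Heisenberg algebra H_t^+ generated over K(t) by central invertible γ^{±1/2}, α_+^{±1} and elements α_{+,m} (m ∈ ℤ^×) with relations [α_{+,-m}, α_{+,n}] = -(δ_{m,n}/m)[2m]_t (γ^m - γ^{-m})/(t - t^{-1}), the generating series L⁺(z) = exp(-(t - t^{-1}) ∑_{m≥1} α_{+,-m}(t²z)^m) and R⁺(z) = α_+ exp((t - t^{-1}) ∑_{m≥1} α_{+,m}(t^{-2}z)^{-m}) satisfy R⁺(v)L⁺(z) = θ⁺(z/v) L⁺(z)R⁺(v), where θ⁺(z) = ((1 - t^{6}γz)(1 - t^{2}γ^{-1}z)) / ((1 - t^{2}γz)(1 - t^{6}γ^{-1}z)) expanded for |z| small; moreover any two L⁺'s commute and any two R⁺'s commute. -/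
/-!
`expSeries` behaves like a genuine exponential: for the formal derivative `D` one has
`D (exp f) = exp f * D f` when the coefficients of `f` commute, and a solution of `D y = y * r`
is determined by its constant coefficient. This gives `exp (f + g) = exp f * exp g` for
commuting coefficients and `exp (log (1 - uX)) = 1 - uX`, hence `θ⁺ = exp (log θ⁺)` with
`log θ⁺ = ∑ₘ (1/m) ((t²γ)ᵐ + (t⁶γ⁻¹)ᵐ - (t⁶γ)ᵐ - (t²γ⁻¹)ᵐ) Xᵐ`.

Write `a(z)`, `b(w)` for the exponents of `L⁺(z)` and `R⁺(v)` (with `w = v⁻¹`) and `c(x)` for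
`log θ⁺`. The Heisenberg relations say exactly `[bᵢ, aⱼ] = δᵢⱼ cᵢ` with `cᵢ` central. In
`A⟦z⟧⟦w⟧` this means that `exp a(z)` conjugates `b(w)` into `b(w) + c(zw)`, so
`exp b(w) · exp a(z) = exp c(zw) · exp a(z) · exp b(w)`; reading off the coefficient of
`zᵐwⁿ` gives the exchange relation. The commutation of the `L⁺`'s (resp. `R⁺`'s) among
themselves holds because the `α₋ₘ` (resp. `αₘ`), `m > 0`, commute.
-/

/-- The exponential of a power series with coefficients in an `F`-algebra `A`
(`F` of characteristic zero): `exp f = ∑_k f^k / k!`, computed coefficientwise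
(this is well defined when the constant coefficient of `f` is `0`, since then
`coeff n (f^k) = 0` for `k > n`). -/
noncomputable def expSeries {F : Type*} [Field F] {A : Type*} [Ring A] [Algebra F A]
    (f : PowerSeries A) : PowerSeries A :=
  PowerSeries.mk fun n => ∑ k ∈ Finset.range (n + 1),
    ((k.factorial : F)⁻¹) • PowerSeries.coeff (R := A) n (f ^ k)

open PowerSeries Finset

section PartialSums

variable {F : Type*} [Field F] {A : Type*} [Ring A] [Algebra F A]

theorem commute_of_forall_commute_coeff {p q : A⟦X⟧}
    (h : ∀ i j, Commute (coeff i p) (coeff j q)) : Commute p q := by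
  ext n
  rw [coeff_mul, coeff_mul, ← Nat.sum_antidiagonal_swap]
  exact sum_congr rfl fun x _ => (h x.2 x.1).eq

theorem coeff_mul_congr_left {p q : A⟦X⟧} {n : ℕ} (h : ∀ i ≤ n, coeff i p = coeff i q)
    (r : A⟦X⟧) : coeff n (p * r) = coeff n (q * r) := by
  simp only [coeff_mul]
  exact sum_congr rfl fun x hx => by rw [h x.1 (HasAntidiagonal.antidiagonal.fst_le hx)]

theorem coeff_mul_congr_right {p q : A⟦X⟧} {n : ℕ} (h : ∀ i ≤ n, coeff i p = coeff i q)
    (r : A⟦X⟧) : coeff n (r * p) = coeff n (r * q) := by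
  simp only [coeff_mul]
  exact sum_congr rfl fun x hx => by rw [h x.2 (HasAntidiagonal.antidiagonal.snd_le hx)]

theorem coeff_pow_eq_zero_of_lt {f : A⟦X⟧} (hf : constantCoeff f = 0) {n k : ℕ} (h : n < k) :
    coeff n (f ^ k) = 0 := by
  obtain ⟨g, rfl⟩ := X_dvd_iff.mpr hf
  rw [(commute_X g).symm.mul_pow, coeff_X_pow_mul', if_neg (by omega)]

variable (F) in
noncomputable def expPartialSum (N : ℕ) {R : Type*} [Ring R] [Algebra F R] (f : R) : R :=
  ∑ k ∈ range (N + 1), (k.factorial : F)⁻¹ • f ^ k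

theorem coeff_expSeries_eq_coeff_expPartialSum {f : A⟦X⟧} (hf : constantCoeff f = 0)
    {n N : ℕ} (h : n ≤ N) :
    coeff n (expSeries (F := F) f) = coeff n (expPartialSum F N f) := by
  rw [expSeries, coeff_mk, expPartialSum, map_sum]
  refine sum_subset (range_subset_range.mpr (by omega)) fun k _ hk => ?_
  rw [mem_range, not_lt] at hk
  rw [coeff_pow_eq_zero_of_lt hf (by omega), smul_zero]

theorem inv_factorial_succ_smul_nsmul [CharZero F] {M : Type*} [AddCommGroup M] [Module F M]
    (i : ℕ) (x : M) : ((i + 1).factorial : F)⁻¹ • ((i + 1) • x) = (i.factorial : F)⁻¹ • x := by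
  rw [← Nat.cast_smul_eq_nsmul F, smul_smul, Nat.factorial_succ, Nat.cast_mul, mul_inv,
    mul_right_comm, inv_mul_cancel₀ (Nat.cast_ne_zero.mpr i.succ_ne_zero), one_mul]

section Derivation

variable {R : Type*} [Ring R] [Algebra F R] (δ : R →ₗ[F] R)
  (hδ : ∀ a b, δ (a * b) = δ a * b + a * δ b)
include hδ

theorem map_pow_succ_of_leibniz {f : R} (hf : Commute f (δ f)) (k : ℕ) :
    δ (f ^ (k + 1)) = (k + 1) • (f ^ k * δ f) := by
  induction k with
  | zero => simp
  | succ k ih =>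
    rw [pow_succ, hδ, ih, succ_nsmul _ (k + 1), smul_mul_assoc, mul_assoc, ← hf.eq, ← mul_assoc,
      ← pow_succ]

theorem map_expPartialSum_succ_of_leibniz [CharZero F] {f : R} (hf : Commute f (δ f)) (N : ℕ) :
    δ (expPartialSum F (N + 1) f) = expPartialSum F N f * δ f := by
  have hδ1 : δ 1 = 0 := by simpa using hδ 1 1
  rw [expPartialSum, sum_range_succ', map_add, map_sum, pow_zero, map_smul, hδ1, smul_zero,
    add_zero, expPartialSum, sum_mul]
  refine sum_congr rfl fun i _ => ?_
  rw [map_smul, map_pow_succ_of_leibniz δ hδ hf, inv_factorial_succ_smul_nsmul,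
    smul_mul_assoc]

end Derivation

end PartialSums

section Derivative

variable {F : Type*} [Field F] {A : Type*} [Ring A] [Algebra F A]

variable (F) in
noncomputable def formalDerivative : A⟦X⟧ →ₗ[F] A⟦X⟧ where
  toFun p := mk fun n => (n + 1) • coeff (n + 1) p
  map_add' p q := by ext; simp [smul_add]
  map_smul' r p := by ext; simp [smul_comm]

theorem coeff_formalDerivative (p : A⟦X⟧) (n : ℕ) :
    coeff n (formalDerivative F p) = (n + 1) • coeff (n + 1) p :=
  coeff_mk n fun n => (n + 1) • coeff (n + 1) p

theorem formalDerivative_mul (p q : A⟦X⟧) :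
    formalDerivative F (p * q) = formalDerivative F p * q + p * formalDerivative F q := by
  ext n
  have hsplit : ∀ x ∈ antidiagonal (n + 1), (n + 1) • (coeff x.1 p * coeff x.2 q) =
      x.1 • (coeff x.1 p * coeff x.2 q) + x.2 • (coeff x.1 p * coeff x.2 q) := fun x hx => by
    rw [← add_nsmul, mem_antidiagonal.mp hx]
  rw [coeff_formalDerivative, map_add, coeff_mul, coeff_mul, coeff_mul, smul_sum,
    sum_congr rfl hsplit, sum_add_distrib, Nat.sum_antidiagonal_succ, Nat.sum_antidiagonal_succ']
  simp only [zero_smul, zero_add, coeff_formalDerivative, smul_mul_assoc, mul_smul_comm]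

theorem commute_formalDerivative {p q : A⟦X⟧} (h : ∀ i j, Commute (coeff i p) (coeff j q)) :
    Commute p (formalDerivative F q) :=
  commute_of_forall_commute_coeff fun i j => by
    rw [coeff_formalDerivative]; exact (h i (j + 1)).smul_right _

variable [CharZero F]

theorem eq_zero_of_formalDerivative_eq_mul {w r : A⟦X⟧} (hw : formalDerivative F w = w * r)
    (h0 : constantCoeff w = 0) : w = 0 := by
  ext n
  induction n using Nat.strong_induction_on with
  | _ n ih =>
    cases n with
    | zero => simpa using h0
    | succ n =>
      have hn := congrArg (coeff n) hw
      rw [coeff_formalDerivative, coeff_mul_congr_left (q := 0) (fun i hi => by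
        simpa using ih i (by omega)), zero_mul, map_zero] at hn
      rw [← Nat.cast_smul_eq_nsmul F] at hn
      exact (smul_eq_zero.mp hn).resolve_left (Nat.cast_ne_zero.mpr n.succ_ne_zero)

theorem eq_of_formalDerivative_eq_mul {y z r : A⟦X⟧} (hy : formalDerivative F y = y * r)
    (hz : formalDerivative F z = z * r) (h0 : constantCoeff y = constantCoeff z) : y = z :=
  sub_eq_zero.mp <| eq_zero_of_formalDerivative_eq_mul (F := F) (r := r)
    (by rw [map_sub, hy, hz, sub_mul]) (by rw [map_sub, h0, sub_self])

theorem formalDerivative_expSeries {f : A⟦X⟧} (hf : constantCoeff f = 0)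
    (hcomm : Commute f (formalDerivative F f)) :
    formalDerivative F (expSeries (F := F) f) = expSeries (F := F) f * formalDerivative F f := by
  ext n
  rw [coeff_formalDerivative, coeff_expSeries_eq_coeff_expPartialSum (F := F) hf le_rfl,
    ← coeff_formalDerivative (F := F),
    map_expPartialSum_succ_of_leibniz (F := F) _ formalDerivative_mul hcomm,
    coeff_mul_congr_left fun i hi => (coeff_expSeries_eq_coeff_expPartialSum hf hi).symm]

end Derivative

section ExpSeries

variable {F : Type*} [Field F] {A : Type*} [Ring A] [Algebra F A]

theorem map_expSeries {B : Type*} [Ring B] [Algebra F B] (φ : A →ₐ[F] B) (f : A⟦X⟧) :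
    map (φ : A →+* B) (expSeries (F := F) f) = expSeries (F := F) (map (φ : A →+* B) f) := by
  ext n
  simp [expSeries, ← map_pow]

theorem coeff_expSeries_mem (S : Subalgebra F A) {f : A⟦X⟧} (h : ∀ i, coeff i f ∈ S) (n : ℕ) :
    coeff n (expSeries (F := F) f) ∈ S := by
  have hf : f = map (S.val : S →+* A) (mk fun i => ⟨coeff i f, h i⟩) := by ext; simp
  rw [hf, ← map_expSeries, coeff_map]
  exact Subtype.prop _

theorem commute_coeff_expSeries {x : A} {f : A⟦X⟧} (h : ∀ i, Commute x (coeff i f)) (n : ℕ) :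
    Commute x (coeff n (expSeries (F := F) f)) := by
  have hmem := coeff_expSeries_mem (Subalgebra.centralizer F {x})
    (fun i => (Subalgebra.mem_centralizer_iff F).mpr (by simpa using (h i).eq)) n
  exact (Subalgebra.mem_centralizer_iff F).mp hmem x rfl

theorem commute_coeff_expSeries_of_commute {f : A⟦X⟧}
    (h : ∀ i j, Commute (coeff i f) (coeff j f)) (m n : ℕ) :
    Commute (coeff m (expSeries (F := F) f)) (coeff n (expSeries (F := F) f)) :=
  commute_coeff_expSeries (fun j => (commute_coeff_expSeries (h j) m).symm) n

theorem constantCoeff_expSeries (f : A⟦X⟧) : constantCoeff (expSeries (F := F) f) = 1 := by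
  rw [← coeff_zero_eq_constantCoeff_apply]
  simp [expSeries]

variable [CharZero F]

theorem expSeries_add {f g : A⟦X⟧} (hf : constantCoeff f = 0) (hg : constantCoeff g = 0)
    (hff : ∀ i j, Commute (coeff i f) (coeff j f)) (hgg : ∀ i j, Commute (coeff i g) (coeff j g))
    (hfg : ∀ i j, Commute (coeff i f) (coeff j g)) :
    expSeries (F := F) (f + g) = expSeries (F := F) f * expSeries (F := F) g := by
  have hsum : ∀ i j, Commute (coeff i (f + g)) (coeff j (f + g)) := fun i j => by
    simp only [map_add]
    exact ((hff i j).add_right (hfg i j)).add_left ((hfg j i).symm.add_right (hgg i j))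
  have hDf : Commute (formalDerivative F f) (expSeries (F := F) g) :=
    commute_of_forall_commute_coeff fun i j => by
      rw [coeff_formalDerivative]; exact (commute_coeff_expSeries (hfg (i + 1)) j).smul_left _
  refine eq_of_formalDerivative_eq_mul (F := F)
    (r := formalDerivative F f + formalDerivative F g) ?_ ?_ ?_
  · rw [formalDerivative_expSeries (by simp [hf, hg]) (commute_formalDerivative hsum), map_add]
  · rw [formalDerivative_mul, formalDerivative_expSeries hf (commute_formalDerivative hff),
      formalDerivative_expSeries hg (commute_formalDerivative hgg), mul_assoc, hDf.eq,
      ← mul_assoc, ← mul_assoc, mul_add]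
  · simp [constantCoeff_expSeries]

end ExpSeries

section Logarithm

variable (F : Type*) [Field F] {A : Type*} [Ring A] [Algebra F A]

/-- The series `log (1 - uX)`; its constant coefficient vanishes because `(0 : F)⁻¹ = 0`. -/
noncomputable def logOneSub (u : A) : A⟦X⟧ :=
  mk fun m => -((m : F)⁻¹ • u ^ m)

variable {F}

theorem coeff_logOneSub (u : A) (m : ℕ) : coeff m (logOneSub F u) = -((m : F)⁻¹ • u ^ m) :=
  coeff_mk _ _

theorem constantCoeff_logOneSub (u : A) : constantCoeff (logOneSub F u) = 0 := by
  rw [← coeff_zero_eq_constantCoeff_apply]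
  simp [coeff_logOneSub]

theorem coeff_logOneSub_mem (S : Subalgebra F A) {u : A} (hu : u ∈ S) (m : ℕ) :
    coeff m (logOneSub F u) ∈ S := by
  rw [coeff_logOneSub]
  exact neg_mem (S.smul_mem (pow_mem hu m) _)

theorem map_logOneSub {B : Type*} [Ring B] [Algebra F B] (φ : A →ₐ[F] B) (u : A) :
    map (φ : A →+* B) (logOneSub F u) = logOneSub F (φ u) := by
  ext m
  simp [coeff_logOneSub]

theorem one_sub_C_mul_X_mul_mk_pow_succ (u : A) :
    (1 - C u * X) * PowerSeries.mk (fun n => u ^ (n + 1)) = C u := by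
  ext n
  rw [sub_mul, one_mul, mul_assoc, map_sub, coeff_C_mul]
  cases n <;> simp [coeff_C, pow_succ']

variable [CharZero F]

theorem expSeries_logOneSub (u : A) : expSeries (F := F) (logOneSub F u) = 1 - C u * X := by
  have hcomm : ∀ i j, Commute (coeff i (logOneSub F u)) (coeff j (logOneSub F u)) := fun i j => by
    simp only [coeff_logOneSub]
    exact (((Commute.pow_pow_self u i j).smul_left _).smul_right _).neg_left.neg_right
  have hD : formalDerivative F (logOneSub F u) = -PowerSeries.mk fun n => u ^ (n + 1) := by
    ext n
    rw [coeff_formalDerivative, coeff_logOneSub, map_neg, coeff_mk, ← Nat.cast_smul_eq_nsmul F,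
      smul_neg, smul_smul, Nat.cast_add_one, mul_inv_cancel₀ n.cast_add_one_ne_zero, one_smul]
  refine eq_of_formalDerivative_eq_mul (F := F) (r := formalDerivative F (logOneSub F u))
    (formalDerivative_expSeries (constantCoeff_logOneSub u) (commute_formalDerivative hcomm))
    ?_ (by simp [constantCoeff_expSeries])
  have hD1 : formalDerivative F (1 : A⟦X⟧) = 0 := by
    ext n; simp [coeff_formalDerivative, coeff_one]
  have hDX : formalDerivative F (C u * X) = C u := by
    ext n; rw [coeff_formalDerivative, coeff_C_mul, coeff_X, coeff_C]; cases n <;> simp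
  rw [hD, mul_neg, one_sub_C_mul_X_mul_mk_pow_succ, map_sub, hD1, hDX, zero_sub]

end Logarithm

section Theta

variable {F : Type*} [Field F] [CharZero F]

theorem mul_expSeries_logOneSub_eq {R : Type*} [CommRing R] [Algebra F R] (u₁ u₂ u₃ u₄ : R) :
    (1 - C u₁ * X) * (1 - C u₂ * X) * expSeries (F := F)
      (logOneSub F u₃ + logOneSub F u₄ - logOneSub F u₁ - logOneSub F u₂) =
      (1 - C u₃ * X) * (1 - C u₄ * X) := by
  have hadd : ∀ f g : R⟦X⟧, constantCoeff f = 0 → constantCoeff g = 0 →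
      expSeries (F := F) (f + g) = expSeries (F := F) f * expSeries (F := F) g :=
    fun f g hf hg => expSeries_add hf hg (fun _ _ => .all _ _) (fun _ _ => .all _ _)
      (fun _ _ => .all _ _)
  simp only [← expSeries_logOneSub (F := F)]
  rw [← hadd _ _ (constantCoeff_logOneSub _) (constantCoeff_logOneSub _),
    ← hadd _ _ (by simp [constantCoeff_logOneSub]) (by simp [constantCoeff_logOneSub]),
    ← hadd _ _ (constantCoeff_logOneSub _) (constantCoeff_logOneSub _)]
  congr 1
  ring

variable {A : Type*} [Ring A] [Algebra F A]

theorem eq_map_expSeries_of_mul_eq {R : Type*} [CommRing R] [Algebra F R] (φ : R →ₐ[F] A)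
    (u₁ u₂ u₃ u₄ : R) {θ : A⟦X⟧} (hθ : (1 - C (φ u₁) * X) * (1 - C (φ u₂) * X) * θ =
      (1 - C (φ u₃) * X) * (1 - C (φ u₄) * X)) :
    θ = expSeries (F := F) (logOneSub F (φ u₃) + logOneSub F (φ u₄) - logOneSub F (φ u₁) -
      logOneSub F (φ u₂)) := by
  have key := congrArg (map (φ : R →+* A)) (mul_expSeries_logOneSub_eq (F := F) u₁ u₂ u₃ u₄)
  simp only [map_mul, map_sub, map_one, map_C, map_X, map_expSeries, map_add, map_logOneSub]
    at key
  refine (isUnit_iff_constantCoeff.mpr ?_).mul_left_cancel (hθ.trans key.symm)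
  simp

end Theta

section Commutator

variable {F : Type*} [Field F] {A : Type*} [Ring A] [Algebra F A]

theorem mem_center_of_forall_coeff_mem {p : A⟦X⟧} (h : ∀ i, coeff i p ∈ Subalgebra.center F A) :
    p ∈ Subalgebra.center F A⟦X⟧ :=
  Subalgebra.mem_center_iff.mpr fun _ =>
    (commute_of_forall_commute_coeff fun _ j => Subalgebra.mem_center_iff.mp (h j) _).eq

theorem SemiconjBy.expSeries {w f g : A⟦X⟧} (h : SemiconjBy w f g) (hf : constantCoeff f = 0)
    (hg : constantCoeff g = 0) :
    SemiconjBy w (expSeries (F := F) f) (expSeries (F := F) g) := by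
  have hpartial (N : ℕ) : w * expPartialSum F N f = expPartialSum F N g * w := by
    simp only [expPartialSum, mul_sum, sum_mul, mul_smul_comm, smul_mul_assoc, (h.pow_right _).eq]
  ext n
  rw [coeff_mul_congr_right fun i hi => coeff_expSeries_eq_coeff_expPartialSum hf hi, hpartial,
    coeff_mul_congr_left fun i hi => (coeff_expSeries_eq_coeff_expPartialSum hg hi).symm]

theorem mul_expSeries_of_mul_sub_mul [CharZero F] {u d f : A⟦X⟧} (hf : constantCoeff f = 0)
    (hd : u * f - f * u = d) (hfd : Commute f d) :
    u * expSeries (F := F) f = expSeries (F := F) f * (u + d) := by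
  -- `ad u` is a derivation with `ad u f = d`, so it acts on partial sums of `exp f` like `D`.
  let δ : A⟦X⟧ →ₗ[F] A⟦X⟧ := LinearMap.mulLeft F u - LinearMap.mulRight F u
  have hδ : ∀ a b, δ (a * b) = δ a * b + a * δ b := fun a b => by
    simp only [δ, LinearMap.sub_apply, LinearMap.mulLeft_apply, LinearMap.mulRight_apply]
    noncomm_ring
  have hδf : δ f = d := hd
  have hpartial (N : ℕ) : u * expPartialSum F (N + 1) f =
      expPartialSum F (N + 1) f * u + expPartialSum F N f * d := by
    rw [← hδf, ← map_expPartialSum_succ_of_leibniz δ hδ (hδf ▸ hfd)]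
    simp [δ]
  ext n
  rw [coeff_mul_congr_right fun i hi => coeff_expSeries_eq_coeff_expPartialSum hf
      (hi.trans n.le_succ), hpartial, mul_add, map_add, map_add,
    coeff_mul_congr_left fun i hi => (coeff_expSeries_eq_coeff_expPartialSum hf
      (hi.trans n.le_succ)).symm,
    coeff_mul_congr_left fun i hi => (coeff_expSeries_eq_coeff_expPartialSum hf hi).symm]

variable (A) in
/-- The substitution `f(X) ↦ f(XY)`, with `Y` the outer variable of `A⟦X⟧⟦Y⟧`. -/
noncomputable def diagonalHom : A⟦X⟧ →+* A⟦X⟧⟦X⟧ where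
  toFun f := PowerSeries.mk fun n => monomial n (coeff n f)
  map_one' := by
    ext n : 1
    simp only [coeff_mk, coeff_one]
    split_ifs with h <;> simp [h]
  map_mul' f g := by
    ext n : 1
    rw [coeff_mk, coeff_mul, coeff_mul, map_sum]
    exact sum_congr rfl fun x hx => by
      rw [coeff_mk, coeff_mk, monomial_mul_monomial, mem_antidiagonal.mp hx]
  map_zero' := by ext n : 1; simp
  map_add' f g := by ext n : 1; simp

theorem coeff_diagonalHom (f : A⟦X⟧) (n : ℕ) :
    coeff n (diagonalHom A f) = monomial n (coeff n f) :=
  coeff_mk n fun n => monomial n (coeff n f)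

theorem expSeries_diagonalHom (h : A⟦X⟧) :
    expSeries (F := F) (diagonalHom A h) = diagonalHom A (expSeries (F := F) h) := by
  ext n m
  simp [expSeries, coeff_diagonalHom, ← map_pow, coeff_monomial]

theorem constantCoeff_diagonalHom (h : A⟦X⟧) :
    constantCoeff (diagonalHom A h) = C (constantCoeff h) := by
  rw [← coeff_zero_eq_constantCoeff_apply, coeff_diagonalHom, monomial_zero_eq_C_apply,
    coeff_zero_eq_constantCoeff_apply]

theorem coeff_diagonalHom_mem_center {h : A⟦X⟧} (hh : ∀ i, coeff i h ∈ Subalgebra.center F A)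
    (i : ℕ) : coeff i (diagonalHom A h) ∈ Subalgebra.center F A⟦X⟧ := by
  refine mem_center_of_forall_coeff_mem fun j => ?_
  rw [coeff_diagonalHom, coeff_monomial]
  split_ifs
  exacts [hh i, Subalgebra.zero_mem _]

variable (F A) in
noncomputable def constantAlgHom : A →ₐ[F] A⟦X⟧ :=
  { C with commutes' := fun _ => algebraMap_apply.symm }

theorem coe_constantAlgHom : (constantAlgHom F A : A →+* A⟦X⟧) = C :=
  rfl

variable [CharZero F]

theorem expSeries_map_mul_C_expSeries {f g h : A⟦X⟧} (hf : constantCoeff f = 0)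
    (hg : constantCoeff g = 0) (hgg : ∀ i j, Commute (coeff i g) (coeff j g))
    (hh : ∀ i, coeff i h ∈ Subalgebra.center F A)
    (hgf : ∀ i j, coeff i g * coeff j f - coeff j f * coeff i g = if i = j then coeff i h else 0) :
    expSeries (F := F) (map (constantAlgHom F A : A →+* A⟦X⟧) g) * C (expSeries (F := F) f) =
      expSeries (F := F) (diagonalHom A h) *
        (C (expSeries (F := F) f) *
          expSeries (F := F) (map (constantAlgHom F A : A →+* A⟦X⟧) g)) := by
  set G := map (constantAlgHom F A : A →+* A⟦X⟧) g
  set W := C (expSeries (F := F) f)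
  set H := diagonalHom A h
  have hh0 : constantCoeff h = 0 := by simpa [hg] using (hgf 0 0).symm
  have hHcenter : ∀ i, coeff i H ∈ Subalgebra.center F A⟦X⟧ := coeff_diagonalHom_mem_center hh
  have hG0 : constantCoeff G = 0 := by
    rw [← coeff_zero_eq_constantCoeff_apply, coeff_map, coeff_zero_eq_constantCoeff_apply, hg,
      map_zero]
  have hH0 : constantCoeff H = 0 := by rw [constantCoeff_diagonalHom, hh0, map_zero]
  -- conjugation by `W = exp f(z)` shifts `G = g(w)` by the central series `H = h(zw)`
  have hconj : SemiconjBy W (G + H) G := by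
    ext q : 1
    rw [coeff_C_mul, coeff_mul_C, map_add, coeff_map, coe_constantAlgHom]
    refine (mul_expSeries_of_mul_sub_mul hf ?_ (Subalgebra.mem_center_iff.mp (hHcenter q) f)).symm
    ext j
    rw [map_sub, coeff_C_mul, coeff_mul_C, hgf, coeff_diagonalHom, coeff_monomial]
    exact if_congr eq_comm rfl rfl
  have hadd : expSeries (F := F) (G + H) = expSeries (F := F) H * expSeries (F := F) G := by
    rw [add_comm]
    refine expSeries_add hH0 hG0 (fun _ j => Subalgebra.mem_center_iff.mp (hHcenter j) _)
      (fun i j => ?_) (fun i _ => (Subalgebra.mem_center_iff.mp (hHcenter i) _).symm)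
    simp only [G, coeff_map, coe_constantAlgHom]
    exact (hgg i j).map C
  have hcenter : expSeries (F := F) H ∈ Subalgebra.center F A⟦X⟧⟦X⟧ :=
    mem_center_of_forall_coeff_mem (coeff_expSeries_mem _ hHcenter)
  calc expSeries (F := F) G * W = W * expSeries (F := F) (G + H) :=
        (hconj.expSeries (by rw [map_add, hG0, hH0, add_zero]) hG0).symm
    _ = expSeries (F := F) H * (W * expSeries (F := F) G) := by
        rw [hadd, ← mul_assoc, ← mul_assoc, Subalgebra.mem_center_iff.mp hcenter W]

theorem coeff_expSeries_mul_coeff_expSeries {f g h : A⟦X⟧} (hf : constantCoeff f = 0)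
    (hg : constantCoeff g = 0) (hgg : ∀ i j, Commute (coeff i g) (coeff j g))
    (hh : ∀ i, coeff i h ∈ Subalgebra.center F A)
    (hgf : ∀ i j, coeff i g * coeff j f - coeff j f * coeff i g = if i = j then coeff i h else 0)
    (m n : ℕ) :
    coeff n (expSeries (F := F) g) * coeff m (expSeries (F := F) f) =
      ∑ p ∈ range (min m n + 1), coeff p (expSeries (F := F) h) *
        (coeff (m - p) (expSeries (F := F) f) * coeff (n - p) (expSeries (F := F) g)) := by
  have hG : ∀ q, coeff q (expSeries (F := F) (map (constantAlgHom F A : A →+* A⟦X⟧) g)) =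
      C (coeff q (expSeries (F := F) g)) := fun q => by
    rw [← map_expSeries, coeff_map, coe_constantAlgHom]
  have hterm : ∀ p (a b : A) (E : A⟦X⟧), coeff m (monomial p a * (E * C b)) =
      if p ≤ m then a * (coeff (m - p) E * b) else 0 := fun p a b E => by
    rw [monomial_eq_C_mul_X_pow, mul_assoc, coeff_C_mul, coeff_X_pow_mul']
    split_ifs <;> simp [coeff_mul_C]
  have key := congrArg (fun s => coeff m (coeff n s))
    (expSeries_map_mul_C_expSeries hf hg hgg hh hgf)
  simp only [coeff_mul_C, hG, coeff_C_mul] at key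
  rw [key, coeff_mul, map_sum, Nat.sum_antidiagonal_eq_sum_range_succ_mk]
  simp only [coeff_C_mul, hG, expSeries_diagonalHom, coeff_diagonalHom, hterm]
  rw [← sum_filter]
  congr 1
  ext p
  simp only [mem_filter, mem_range]
  omega

end Commutator

section QuantumHeisenberg

variable {F : Type*} [Field F] {A : Type*} [Ring A] [Algebra F A]

def HeisenbergRelations (t : F) (γ : Aˣ) (α : ℤ → A) : Prop :=
  ∀ m n : ℤ, m ≠ 0 → n ≠ 0 →
    α (-m) * α n - α n * α (-m) =
      if m = n then
        (-(1 / (m : F)) * ((t ^ (2 * m) - t ^ (-(2 * m))) / (t - t⁻¹)) / (t - t⁻¹)) •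
          (((γ ^ m : Aˣ) : A) - ((γ ^ (-m) : Aˣ) : A))
      else 0

/-- `L⁺(z) = exp (lSeries t α)(z)` and `R⁺(v) = α₊ exp (rSeries t α)(v⁻¹)`. -/
noncomputable def lSeries (t : F) (α : ℤ → A) : A⟦X⟧ :=
  PowerSeries.mk fun k => if k = 0 then 0 else (-(t - t⁻¹) * t ^ (2 * k)) • α (-(k : ℤ))

noncomputable def rSeries (t : F) (α : ℤ → A) : A⟦X⟧ :=
  PowerSeries.mk fun k => if k = 0 then 0 else ((t - t⁻¹) * t ^ (2 * k)) • α (k : ℤ)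

noncomputable def thetaLog (t : F) (γ : Aˣ) : A⟦X⟧ :=
  logOneSub F (t ^ 6 • (γ : A)) + logOneSub F (t ^ 2 • ((γ⁻¹ : Aˣ) : A)) -
    logOneSub F (t ^ 2 • (γ : A)) - logOneSub F (t ^ 6 • ((γ⁻¹ : Aˣ) : A))

variable {t : F} {γ : Aˣ} {α : ℤ → A}

theorem HeisenbergRelations.commute (hrel : HeisenbergRelations t γ α) {m n : ℤ} (hm : m ≠ 0)
    (hn : n ≠ 0) (hmn : m ≠ n) : Commute (α (-m)) (α n) :=
  sub_eq_zero.mp ((hrel m n hm hn).trans (if_neg hmn))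

theorem commute_coeff_lSeries (hrel : HeisenbergRelations t γ α) (i j : ℕ) :
    Commute (coeff i (lSeries t α)) (coeff j (lSeries t α)) := by
  simp only [lSeries, coeff_mk]
  split_ifs with hi hj hj
  · exact .zero_left _
  · exact .zero_left _
  · exact .zero_right _
  exact ((hrel.commute (by omega) (by omega) (by omega)).smul_left _).smul_right _

theorem commute_coeff_rSeries (hrel : HeisenbergRelations t γ α) (i j : ℕ) :
    Commute (coeff i (rSeries t α)) (coeff j (rSeries t α)) := by
  simp only [rSeries, coeff_mk]
  split_ifs with hi hj hj
  · exact .zero_left _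
  · exact .zero_left _
  · exact .zero_right _
  have := hrel.commute (m := -i) (n := j) (by omega) (by omega) (by omega)
  rw [neg_neg] at this
  exact (this.smul_left _).smul_right _

theorem coeff_rSeries_mul_coeff_lSeries_sub [CharZero F] (ht : t - t⁻¹ ≠ 0)
    (hrel : HeisenbergRelations t γ α) (i j : ℕ) :
    coeff i (rSeries t α) * coeff j (lSeries t α) - coeff j (lSeries t α) * coeff i (rSeries t α) =
      if i = j then coeff i (thetaLog t γ) else 0 := by
  rcases eq_or_ne i 0 with rfl | hi
  · simp [rSeries, thetaLog, constantCoeff_logOneSub]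
  rcases eq_or_ne j 0 with rfl | hj
  · simp [lSeries, hi]
  simp only [rSeries, lSeries, coeff_mk, if_neg hi, if_neg hj, smul_mul_smul_comm]
  split_ifs with hij
  · subst hij
    have h := hrel i i (by omega) (by omega)
    rw [if_pos rfl] at h
    rw [mul_comm (-(t - t⁻¹) * _), ← smul_sub, ← neg_sub (α (-i : ℤ) * α i), h]
    have ht0 : t ≠ 0 := by rintro rfl; simp at ht
    simp only [thetaLog, map_sub, map_add, coeff_logOneSub, smul_pow, zpow_neg, zpow_natCast,
      Units.val_pow_eq_pow_val, ← inv_pow, zpow_mul]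
    match_scalars
    all_goals
      simp only [zpow_ofNat, pow_mul, inv_pow, show (t ^ 6) ^ i = ((t ^ 2) ^ i) ^ 3 by ring]
      have hX : (t ^ 2) ^ i ≠ 0 := by positivity
      generalize (t ^ 2) ^ i = X at hX ⊢
      generalize t - t⁻¹ = d at ht ⊢
      field_simp
      ring
  · rw [mul_comm (-(t - t⁻¹) * _), (hrel.commute (m := j) (n := i) (by omega) (by omega)
      (by omega)).eq, sub_self]

theorem coeff_thetaLog_mem_center (hγ : (γ : A) ∈ Subalgebra.center F A) (i : ℕ) :
    coeff i (thetaLog t γ) ∈ Subalgebra.center F A := by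
  have hγinv : ((γ⁻¹ : Aˣ) : A) ∈ Subalgebra.center F A := Set.units_inv_mem_center hγ
  simp only [thetaLog, map_sub, map_add]
  refine sub_mem (sub_mem (add_mem ?_ ?_) ?_) ?_ <;>
    exact coeff_logOneSub_mem _ (Subalgebra.smul_mem _ ‹_› _) i

theorem eq_expSeries_thetaLog [CharZero F] (hγ : (γ : A) ∈ Subalgebra.center F A) {θ : A⟦X⟧}
    (hθ : (1 - C (t ^ 2 • (γ : A)) * X) * (1 - C (t ^ 6 • ((γ⁻¹ : Aˣ) : A)) * X) * θ =
      (1 - C (t ^ 6 • (γ : A)) * X) * (1 - C (t ^ 2 • ((γ⁻¹ : Aˣ) : A)) * X)) :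
    θ = expSeries (F := F) (thetaLog t γ) := by
  have hγinv : ((γ⁻¹ : Aˣ) : A) ∈ Subalgebra.center F A := Set.units_inv_mem_center hγ
  exact eq_map_expSeries_of_mul_eq (Subalgebra.center F A).val ⟨_, Subalgebra.smul_mem _ hγ _⟩
    ⟨_, Subalgebra.smul_mem _ hγinv _⟩ ⟨_, Subalgebra.smul_mem _ hγ _⟩
    ⟨_, Subalgebra.smul_mem _ hγinv _⟩ hθ

end QuantumHeisenberg

theorem stmt_12_general {F : Type*} [Field F] [CharZero F] (t : F)
    (ht' : t - t⁻¹ ≠ 0)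
    {A : Type*} [Ring A] [Algebra F A]
    (γ αplus : Aˣ)
    (hγ : ∀ x : A, (γ : A) * x = x * (γ : A))
    (hα : ∀ x : A, (αplus : A) * x = x * (αplus : A))
    (α : ℤ → A)
    (hrel : ∀ m n : ℤ, m ≠ 0 → n ≠ 0 →
      α (-m) * α n - α n * α (-m) =
        if m = n then
          (-(1 / (m : F)) * ((t ^ (2 * m) - t ^ (-(2 * m))) / (t - t⁻¹)) / (t - t⁻¹)) •
            (((γ ^ m : Aˣ) : A) - ((γ ^ (-m) : Aˣ) : A))
        else 0)
    (L R : ℕ → A)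
    (hL : ∀ m : ℕ, L m = PowerSeries.coeff (R := A) m (expSeries (F := F)
      (PowerSeries.mk fun k => if k = 0 then 0 else (-(t - t⁻¹) * t ^ (2 * k)) • α (-(k : ℤ)))))
    (hR : ∀ n : ℕ, R n = (αplus : A) * PowerSeries.coeff (R := A) n (expSeries (F := F)
      (PowerSeries.mk fun k => if k = 0 then 0 else ((t - t⁻¹) * t ^ (2 * k)) • α (k : ℤ))))
    (θ : PowerSeries A)
    (hθ : (1 - PowerSeries.C (R := A) (t ^ 2 • (γ : A)) * PowerSeries.X) *
          (1 - PowerSeries.C (R := A) (t ^ 6 • ((γ⁻¹ : Aˣ) : A)) * PowerSeries.X) * θ =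
          (1 - PowerSeries.C (R := A) (t ^ 6 • (γ : A)) * PowerSeries.X) *
          (1 - PowerSeries.C (R := A) (t ^ 2 • ((γ⁻¹ : Aˣ) : A)) * PowerSeries.X)) :
    (∀ m n : ℕ, R n * L m =
        ∑ p ∈ Finset.range (min m n + 1),
          PowerSeries.coeff (R := A) p θ * (L (m - p) * R (n - p))) ∧
    (∀ m m' : ℕ, L m * L m' = L m' * L m) ∧
    (∀ n n' : ℕ, R n * R n' = R n' * R n) := by
  have hγ' : (γ : A) ∈ Subalgebra.center F A :=
    Subalgebra.mem_center_iff.mpr fun x => (hγ x).symm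
  have hα' : ∀ x : A, Commute (αplus : A) x := hα
  have hL' : ∀ m, L m = coeff m (expSeries (F := F) (lSeries t α)) := hL
  have hR' : ∀ n, R n = αplus * coeff n (expSeries (F := F) (rSeries t α)) := hR
  have hLR := coeff_expSeries_mul_coeff_expSeries (F := F) constantCoeff_mk constantCoeff_mk
    (commute_coeff_rSeries hrel) (coeff_thetaLog_mem_center hγ')
    (coeff_rSeries_mul_coeff_lSeries_sub ht' hrel)
  refine ⟨fun m n => ?_, fun m m' => ?_, fun n n' => ?_⟩
  · rw [hR', hL', eq_expSeries_thetaLog hγ' hθ, mul_assoc, hLR, mul_sum]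
    refine sum_congr rfl fun p _ => ?_
    rw [hL', hR', (hα' _).left_comm, (hα' _).left_comm]
  · rw [hL', hL']
    exact (commute_coeff_expSeries_of_commute (commute_coeff_lSeries hrel) m m').eq
  · rw [hR', hR']
    have hcomm := commute_coeff_expSeries_of_commute (F := F) (commute_coeff_rSeries hrel) n n'
    exact (((Commute.refl _).mul_right (hα' _)).mul_left ((hα' _).symm.mul_right hcomm)).eq

/-- In the quantum Heisenberg algebra `H_t^+` (relations
`[α_{-m}, α_n] = -(δ_{m,n}/m)[2m]_t (γ^m - γ^{-m})/(t - t⁻¹)`, `γ, α₊` central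
invertible), the series `L⁺(z) = exp(-(t-t⁻¹)∑_{m≥1} α_{-m}(t²z)^m)` and
`R⁺(v) = α₊ exp((t-t⁻¹)∑_{m≥1} α_m (t⁻²v)^{-m})` satisfy
`R⁺(v)L⁺(z) = θ⁺(z/v) L⁺(z) R⁺(v)` where `θ⁺` is the power-series expansion of
`((1-t⁶γx)(1-t²γ⁻¹x))/((1-t²γx)(1-t⁶γ⁻¹x))`; moreover any two `L⁺`'s commute
and any two `R⁺`'s commute.  All identities are stated coefficientwise. -/
theorem stmt_12 {F : Type*} [Field F] [CharZero F] (t : F) (ht : t ≠ 0)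
    (ht' : t - t⁻¹ ≠ 0)
    {A : Type*} [Ring A] [Algebra F A]
    (γ αplus : Aˣ)
    (hγ : ∀ x : A, (γ : A) * x = x * (γ : A))
    (hα : ∀ x : A, (αplus : A) * x = x * (αplus : A))
    (α : ℤ → A)
    (hrel : ∀ m n : ℤ, m ≠ 0 → n ≠ 0 →
      α (-m) * α n - α n * α (-m) =
        if m = n then
          (-(1 / (m : F)) * ((t ^ (2 * m) - t ^ (-(2 * m))) / (t - t⁻¹)) / (t - t⁻¹)) •
            (((γ ^ m : Aˣ) : A) - ((γ ^ (-m) : Aˣ) : A))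
        else 0)
    (L R : ℕ → A)
    (hL : ∀ m : ℕ, L m = PowerSeries.coeff (R := A) m (expSeries (F := F)
      (PowerSeries.mk fun k => if k = 0 then 0 else (-(t - t⁻¹) * t ^ (2 * k)) • α (-(k : ℤ)))))
    (hR : ∀ n : ℕ, R n = (αplus : A) * PowerSeries.coeff (R := A) n (expSeries (F := F)
      (PowerSeries.mk fun k => if k = 0 then 0 else ((t - t⁻¹) * t ^ (2 * k)) • α (k : ℤ))))
    (θ : PowerSeries A)
    (hθ : (1 - PowerSeries.C (R := A) (t ^ 2 • (γ : A)) * PowerSeries.X) *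
          (1 - PowerSeries.C (R := A) (t ^ 6 • ((γ⁻¹ : Aˣ) : A)) * PowerSeries.X) * θ =
          (1 - PowerSeries.C (R := A) (t ^ 6 • (γ : A)) * PowerSeries.X) *
          (1 - PowerSeries.C (R := A) (t ^ 2 • ((γ⁻¹ : Aˣ) : A)) * PowerSeries.X)) :
    (∀ m n : ℕ, R n * L m =
        ∑ p ∈ Finset.range (min m n + 1),
          PowerSeries.coeff (R := A) p θ * (L (m - p) * R (n - p))) ∧
    (∀ m m' : ℕ, L m * L m' = L m' * L m) ∧
    (∀ n n' : ℕ, R n * R n' = R n' * R n) :=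
  stmt_12_general t ht' γ αplus hγ hα α hrel L R hL hR θ hθ
end
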